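/- Let h be a homeomorphism of the Cantor space satisfying: for every m ∈ ℕ there is a partition P of mesh < 1/m such that every component of Γ(h,P) is a dumbbell. Then h has the shadowing property: for every ε > 0 there exists δ > 0 such that every δ-pseudotrajectory (x_n)_{n∈ℤ} of h is ε-shadowed by a real trajectory, i.e., there exists x with d(x_n, hⁿ(x)) < ε for all n ∈ ℤ. -/

import Mathlib

/-! Take a partition of mesh `< ε` and a `δ` below the scale at which its clopen pieces are
determined. The pieces `A n` visited by a `δ`-pseudotrajectory then form a bi-infinite path in
`Γ(h, P)`, hence in a single dumbbell. Away from the fork vertex `0` a piece has a unique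
successor, so `h` maps it into the next piece; away from the junction vertex `r + s` it has a
unique predecessor, so `h⁻¹` maps it into the previous one. The path passes the fork strictly
before the junction, so every finite stretch of the itinerary is realised by pushing a point
forward or pulling it back, and compactness gives a true orbit through all the `A n`. -/

noncomputable def cantorDist (σ τ : ℕ → Bool) : ℝ :=
  letI := Classical.propDecidable (∃ n, σ n ≠ τ n)
  if h : ∃ n, σ n ≠ τ n then 1 / (Nat.find h + 1) else 0

def IsPartition (P : Finset (Set (ℕ → Bool))) : Prop :=
  (∀ a ∈ P, IsClopen a ∧ a.Nonempty) ∧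
  (∀ a ∈ P, ∀ b ∈ P, a ≠ b → Disjoint a b) ∧
  ⋃₀ (P : Set (Set (ℕ → Bool))) = Set.univ

noncomputable def cantorDiam (A : Set (ℕ → Bool)) : ℝ :=
  sSup {r | ∃ σ ∈ A, ∃ τ ∈ A, r = cantorDist σ τ}

noncomputable def mesh (C : Set (Set (ℕ → Bool))) : ℝ :=
  sSup (cantorDiam '' C)

def gammaEdge (f : (ℕ → Bool) → (ℕ → Bool)) (a b : Set (ℕ → Bool)) : Prop :=
  (f '' a ∩ b).Nonempty

def balloonEdge (s m : ℕ) (a b : Fin (s + m)) : Prop :=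
  b.val = a.val + 1 ∨ (a.val = s + m - 1 ∧ b.val = s)

def dumbbellEdge (r s t : ℕ) (a b : Fin (r + s + t)) : Prop :=
  (b.val = a.val + 1 ∧ a.val + 1 ≠ r) ∨
  (a.val = r - 1 ∧ b.val = 0) ∨
  (a.val = 0 ∧ b.val = r) ∨
  (a.val = r + s + t - 1 ∧ b.val = r + s)

/-- Every component of `Γ(h,P)` is a dumbbell. -/
def AllComponentsDumbbells (h : (ℕ → Bool) → (ℕ → Bool))
    (P : Finset (Set (ℕ → Bool))) : Prop :=
  ∃ (k : ℕ) (r s t : Fin k → ℕ),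
    (∀ i, 0 < r i) ∧ (∀ i, 0 < s i) ∧ (∀ i, 0 < t i) ∧
    ∃ e : {a // a ∈ P} ≃ (Σ i : Fin k, Fin (r i + s i + t i)),
      ∀ a b : {a // a ∈ P}, gammaEdge h a.val b.val ↔
        ∃ heq : (e a).1 = (e b).1,
          dumbbellEdge (r (e b).1) (s (e b).1) (t (e b).1)
            (Fin.cast (by rw [heq]) (e a).2) (e b).2

/-- The `n`-th iterate of a homeomorphism, for `n : ℤ`. -/
noncomputable def ziter (h : (ℕ → Bool) ≃ₜ (ℕ → Bool)) (n : ℤ) (x : ℕ → Bool) : ℕ → Bool :=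
  if 0 ≤ n then (⇑h)^[n.toNat] x else (⇑h.symm)^[(-n).toNat] x

open Set PiNat

section Orbit

variable {X : Type*} [TopologicalSpace X] {f : X ≃ₜ X} {A : ℤ → Set X}

lemma Homeomorph.zpow_add_one_apply (f : X ≃ₜ X) (n : ℤ) (x : X) :
    (f ^ (n + 1)) x = f ((f ^ n) x) := by
  rw [add_comm, zpow_one_add]
  rfl

lemma Homeomorph.coe_pow (f : X ≃ₜ X) (n : ℕ) : ⇑(f ^ n) = (⇑f)^[n] := by
  induction n with
  | zero => rfl
  | succ n ih => rw [pow_succ', Function.iterate_succ', ← ih]; rfl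

lemma exists_forall_Icc_zpow_mem_of_mapsTo_symm {a b : ℤ} (hb : (A b).Nonempty)
    (hback : ∀ q, a ≤ q → q < b → MapsTo f.symm (A (q + 1)) (A q)) :
    ∃ y, ∀ n ∈ Icc a b, (f ^ n) y ∈ A n := by
  obtain ⟨z, hz⟩ := hb
  set y := (f ^ b).symm z
  refine ⟨y, ?_⟩
  rintro n ⟨han, hnb⟩
  induction n, hnb using Int.leInductionDown with
  | base => simpa [y] using hz
  | pred n hnb ih =>
    have hmaps := hback (n - 1) han (by omega)
    have hshift : (f ^ n) y = f ((f ^ (n - 1)) y) := by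
      rw [← Homeomorph.zpow_add_one_apply, sub_add_cancel]
    rw [sub_add_cancel] at hmaps
    simpa [hshift] using hmaps (ih (by omega))

/-- Induction on `b`: keep the point while `f` maps `A b` into `A (b + 1)`; otherwise `hsep`
lets a point of `A (b + 1)` be pulled back through the whole window. -/
lemma exists_forall_Icc_zpow_mem (hne : ∀ n, (A n).Nonempty)
    (hsep : ∀ p q, q ≤ p → ¬MapsTo f (A p) (A (p + 1)) → MapsTo f.symm (A (q + 1)) (A q))
    {a b : ℤ} (hab : a ≤ b) : ∃ y, ∀ n ∈ Icc a b, (f ^ n) y ∈ A n := by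
  induction b, hab using Int.leInduction with
  | base => exact exists_forall_Icc_zpow_mem_of_mapsTo_symm (hne a) fun _ haq hqa => by omega
  | succ b hab ih =>
    by_cases hfwd : MapsTo f (A b) (A (b + 1))
    · obtain ⟨y, hy⟩ := ih
      refine ⟨y, fun n ⟨han, hnb⟩ => ?_⟩
      rcases (Int.le_add_one_iff.1 hnb) with hnb | rfl
      · exact hy n ⟨han, hnb⟩
      · rw [Homeomorph.zpow_add_one_apply]
        exact hfwd (hy b ⟨hab, le_rfl⟩)
    · exact exists_forall_Icc_zpow_mem_of_mapsTo_symm (hne _)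
        fun q _ hq => hsep b q (by omega) hfwd

lemma exists_forall_zpow_mem [CompactSpace X] (hclosed : ∀ n, IsClosed (A n))
    (hne : ∀ n, (A n).Nonempty)
    (hsep : ∀ p q, q ≤ p → ¬MapsTo f (A p) (A (p + 1)) → MapsTo f.symm (A (q + 1)) (A q)) :
    ∃ y, ∀ n, (f ^ n) y ∈ A n := by
  obtain ⟨y, hy⟩ := CompactSpace.iInter_nonempty (t := fun n : ℤ => ⇑(f ^ n) ⁻¹' A n)
    (fun n => (hclosed n).preimage (f ^ n).continuous) fun u => by
      set K : ℕ := u.sup Int.natAbs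
      obtain ⟨y, hy⟩ := exists_forall_Icc_zpow_mem hne hsep (a := -K) (b := K) (by omega)
      refine ⟨y, mem_iInter₂.2 fun n hn => hy n ?_⟩
      have : n.natAbs ≤ K := Finset.le_sup hn
      constructor <;> omega
  exact ⟨y, mem_iInter.1 hy⟩

end Orbit

lemma cantorDist_le_one (σ τ : ℕ → Bool) : cantorDist σ τ ≤ 1 := by
  unfold cantorDist
  split
  · rw [div_le_one (by positivity)]
    simp
  · exact zero_le_one

lemma mem_cylinder_of_cantorDist_le {σ τ : ℕ → Bool} {N : ℕ}
    (hd : cantorDist σ τ ≤ 1 / ((N : ℝ) + 1)) : σ ∈ cylinder τ N := by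
  intro i hi
  by_contra hne
  have hex : ∃ n, σ n ≠ τ n := ⟨i, hne⟩
  rw [cantorDist, dif_pos hex, one_div_le_one_div (by positivity) (by positivity)] at hd
  have hfind : N ≤ Nat.find hex := by exact_mod_cast (by linarith : (N : ℝ) ≤ Nat.find hex)
  have : Nat.find hex ≤ i := Nat.find_le hne
  omega

lemma cantorDist_le_cantorDiam {A : Set (ℕ → Bool)} {σ τ : ℕ → Bool} (hσ : σ ∈ A) (hτ : τ ∈ A) :
    cantorDist σ τ ≤ cantorDiam A :=
  le_csSup ⟨1, by rintro _ ⟨σ, -, τ, -, rfl⟩; exact cantorDist_le_one σ τ⟩ ⟨σ, hσ, τ, hτ, rfl⟩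

lemma cantorDiam_le_one (A : Set (ℕ → Bool)) : cantorDiam A ≤ 1 :=
  Real.sSup_le (by rintro _ ⟨σ, -, τ, -, rfl⟩; exact cantorDist_le_one σ τ) zero_le_one

lemma cantorDiam_le_mesh {C : Set (Set (ℕ → Bool))} {A : Set (ℕ → Bool)} (hA : A ∈ C) :
    cantorDiam A ≤ mesh C :=
  le_csSup ⟨1, by rintro _ ⟨B, -, rfl⟩; exact cantorDiam_le_one B⟩ (mem_image_of_mem _ hA)

section Cylinder

variable {E : ℕ → Type*} [∀ n, TopologicalSpace (E n)] [∀ n, DiscreteTopology (E n)]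

lemma exists_cylinder_subset_of_isOpen {s : Set (∀ n, E n)} (hs : IsOpen s) {x : ∀ n, E n}
    (hx : x ∈ s) : ∃ n, cylinder x n ⊆ s := by
  obtain ⟨_, ⟨y, n, rfl⟩, hxy, hsub⟩ :=
    (isTopologicalBasis_cylinders E).exists_subset_of_mem_open hx hs
  exact ⟨n, (mem_cylinder_iff_eq.1 hxy).symm ▸ hsub⟩

lemma IsCompact.exists_cylinder_subset {s : Set (∀ n, E n)} (hc : IsCompact s) (ho : IsOpen s) :
    ∃ N, ∀ x ∈ s, cylinder x N ⊆ s := by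
  choose! n hn using fun x (hx : x ∈ s) => exists_cylinder_subset_of_isOpen ho hx
  obtain ⟨F, hFs, hcover⟩ := hc.elim_nhds_subcover (fun x => cylinder x (n x))
    fun x _ => (isOpen_cylinder E x (n x)).mem_nhds (self_mem_cylinder x (n x))
  refine ⟨F.sup n, fun x hx y hy => ?_⟩
  obtain ⟨z, hzF, hxz⟩ := mem_iUnion₂.1 (hcover hx)
  refine hn z (hFs z hzF) fun i hi => ?_
  have : n z ≤ F.sup n := Finset.le_sup hzF
  rw [hy i (by omega), hxz i hi]

end Cylinder

section Partition

variable {P : Finset (Set (ℕ → Bool))}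

lemma IsPartition.exists_mem (hP : IsPartition P) (σ : ℕ → Bool) : ∃ a ∈ P, σ ∈ a := by
  obtain ⟨a, ha, hσ⟩ := mem_sUnion.1 (hP.2.2 ▸ mem_univ σ)
  exact ⟨a, ha, hσ⟩

lemma IsPartition.exists_cylinder_subset (hP : IsPartition P) :
    ∃ N, ∀ a ∈ P, ∀ σ ∈ a, cylinder σ N ⊆ a := by
  choose! g hg using fun a (ha : a ∈ P) =>
    (hP.1 a ha).1.isClosed.isCompact.exists_cylinder_subset (hP.1 a ha).1.isOpen
  exact ⟨P.sup g, fun a ha σ hσ => (cylinder_anti σ (Finset.le_sup ha)).trans (hg a ha σ hσ)⟩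

lemma IsPartition.mapsTo_of_gammaEdge_imp_eq (hP : IsPartition P)
    {f : (ℕ → Bool) → (ℕ → Bool)} {a b : Set (ℕ → Bool)}
    (huniq : ∀ c ∈ P, gammaEdge f a c → c = b) : MapsTo f a b := by
  intro σ hσ
  obtain ⟨c, hc, hfσ⟩ := hP.exists_mem (f σ)
  exact huniq c hc ⟨f σ, mem_image_of_mem f hσ, hfσ⟩ ▸ hfσ

lemma IsPartition.mapsTo_symm_of_gammaEdge_imp_eq (hP : IsPartition P)
    {h : (ℕ → Bool) ≃ₜ (ℕ → Bool)} {a b : Set (ℕ → Bool)}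
    (huniq : ∀ c ∈ P, gammaEdge h c b → c = a) : MapsTo h.symm b a := by
  intro σ hσ
  obtain ⟨c, hc, hσc⟩ := hP.exists_mem (h.symm σ)
  exact huniq c hc ⟨σ, ⟨h.symm σ, hσc, h.apply_symm_apply σ⟩, hσ⟩ ▸ hσc

end Partition

section Dumbbell

variable {r s t : ℕ}

lemma dumbbellEdge_right_unique {u w w' : Fin (r + s + t)} (hu : u.val ≠ 0)
    (hw : dumbbellEdge r s t u w) (hw' : dumbbellEdge r s t u w') : w = w' := by
  unfold dumbbellEdge at hw hw'
  omega

lemma dumbbellEdge_left_unique {u u' w : Fin (r + s + t)} (hw : w.val ≠ r + s)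
    (hu : dumbbellEdge r s t u w) (hu' : dumbbellEdge r s t u' w) : u = u' := by
  unfold dumbbellEdge at hu hu'
  omega

lemma le_of_dumbbellEdge {u w : Fin (r + s + t)} (huw : dumbbellEdge r s t u w) (hu : r ≤ u.val) :
    r ≤ w.val := by
  unfold dumbbellEdge at huw
  omega

/-- A bi-infinite path in a dumbbell never returns from the handle to the first cycle, so it
leaves through the fork `0` strictly before it enters the second cycle at `r + s`. -/
lemma dumbbell_path_fork_lt_junction (hr : 0 < r) (hs : 0 < s) {v : ℤ → Fin (r + s + t)}
    (hv : ∀ n, dumbbellEdge r s t (v n) (v (n + 1))) {p q : ℤ} (hp : (v p).val = 0)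
    (hq : (v (q + 1)).val = r + s) : p < q := by
  by_contra hpq
  rcases (not_lt.1 hpq).eq_or_lt with rfl | hqp
  · have := hv q
    unfold dumbbellEdge at this
    omega
  · have hreach : ∀ n, q + 1 ≤ n → r ≤ (v n).val := fun n hn => by
      induction n, hn using Int.leInduction with
      | base => omega
      | succ n _ ih => exact le_of_dumbbellEdge (hv n) ih
    have := hreach p hqp
    omega

end Dumbbell

/-- The condition on the labelling `e` in `AllComponentsDumbbells`. -/
def IsDumbbellLabelling (f : (ℕ → Bool) → (ℕ → Bool)) (P : Finset (Set (ℕ → Bool))) {k : ℕ}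
    (r s t : Fin k → ℕ) (e : {a // a ∈ P} ≃ (Σ i : Fin k, Fin (r i + s i + t i))) : Prop :=
  ∀ a b : {a // a ∈ P}, gammaEdge f a.val b.val ↔
    ∃ heq : (e a).1 = (e b).1,
      dumbbellEdge (r (e b).1) (s (e b).1) (t (e b).1) (Fin.cast (by rw [heq]) (e a).2) (e b).2

lemma Sigma.exists_eq_mk_of_fst_eq {ι : Type*} {F : ι → Type*} {x : Σ i, F i} {i : ι}
    (hx : x.1 = i) : ∃ u, x = ⟨i, u⟩ := by
  obtain ⟨j, u⟩ := x
  subst hx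
  exact ⟨u, rfl⟩

namespace IsDumbbellLabelling

variable {f : (ℕ → Bool) → (ℕ → Bool)} {P : Finset (Set (ℕ → Bool))} {k : ℕ}
  {r s t : Fin k → ℕ} {e : {a // a ∈ P} ≃ (Σ i : Fin k, Fin (r i + s i + t i))}
  {a b : Set (ℕ → Bool)} {ha : a ∈ P} {hb : b ∈ P}

lemma fst_eq (he : IsDumbbellLabelling f P r s t e) (hab : gammaEdge f a b) :
    (e ⟨a, ha⟩).1 = (e ⟨b, hb⟩).1 :=
  ((he ⟨a, ha⟩ ⟨b, hb⟩).1 hab).1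

lemma gammaEdge_iff (he : IsDumbbellLabelling f P r s t e) {i : Fin k}
    {u w : Fin (r i + s i + t i)} (hea : e ⟨a, ha⟩ = ⟨i, u⟩) (heb : e ⟨b, hb⟩ = ⟨i, w⟩) :
    gammaEdge f a b ↔ dumbbellEdge (r i) (s i) (t i) u w := by
  have hmk : ∀ x y : Σ j, Fin (r j + s j + t j), x = ⟨i, u⟩ → y = ⟨i, w⟩ →
      ((∃ heq : x.1 = y.1, dumbbellEdge (r y.1) (s y.1) (t y.1) (Fin.cast (by rw [heq]) x.2) y.2)
        ↔ dumbbellEdge (r i) (s i) (t i) u w) := by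
    rintro x y rfl rfl
    exact ⟨fun ⟨_, h⟩ => h, fun h => ⟨rfl, h⟩⟩
  exact (he _ _).trans (hmk _ _ hea heb)

lemma exists_path (he : IsDumbbellLabelling f P r s t e) {A : ℤ → Set (ℕ → Bool)}
    (hA : ∀ n, A n ∈ P) (hedge : ∀ n, gammaEdge f (A n) (A (n + 1))) :
    ∃ (i : Fin k) (v : ℤ → Fin (r i + s i + t i)), (∀ n, e ⟨A n, hA n⟩ = ⟨i, v n⟩) ∧
      ∀ n, dumbbellEdge (r i) (s i) (t i) (v n) (v (n + 1)) := by
  have hfst : ∀ n, (e ⟨A n, hA n⟩).1 = (e ⟨A 0, hA 0⟩).1 := by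
    intro n
    induction n using Int.induction_on with
    | zero => rfl
    | succ n ih => exact (he.fst_eq (hedge n)).symm.trans ih
    | pred n ih =>
      have hstep := he.fst_eq (ha := hA (-n - 1)) (hb := hA (-n - 1 + 1)) (hedge (-n - 1))
      simp only [sub_add_cancel] at hstep
      exact hstep.trans ih
  choose v hv using fun n => Sigma.exists_eq_mk_of_fst_eq (hfst n)
  exact ⟨_, v, hv, fun n => (he.gammaEdge_iff (hv n) (hv (n + 1))).1 (hedge n)⟩

lemma mapsTo_of_ne_fork (he : IsDumbbellLabelling f P r s t e) (hP : IsPartition P)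
    {i : Fin k} {u w : Fin (r i + s i + t i)} (hea : e ⟨a, ha⟩ = ⟨i, u⟩)
    (heb : e ⟨b, hb⟩ = ⟨i, w⟩) (huw : dumbbellEdge (r i) (s i) (t i) u w) (hu : u.val ≠ 0) :
    MapsTo f a b := by
  refine hP.mapsTo_of_gammaEdge_imp_eq fun c hc hac => ?_
  obtain ⟨w', hec⟩ := Sigma.exists_eq_mk_of_fst_eq (i := i)
    ((he.fst_eq (hb := hc) hac).symm.trans (congrArg Sigma.fst hea))
  have hw' : w' = w := dumbbellEdge_right_unique hu ((he.gammaEdge_iff hea hec).1 hac) huw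
  have hcb : e ⟨c, hc⟩ = e ⟨b, hb⟩ := by rw [hec, heb, hw']
  exact congrArg Subtype.val (e.injective hcb)

lemma mapsTo_symm_of_ne_junction {h : (ℕ → Bool) ≃ₜ (ℕ → Bool)}
    (he : IsDumbbellLabelling h P r s t e) (hP : IsPartition P) {i : Fin k}
    {u w : Fin (r i + s i + t i)} (hea : e ⟨a, ha⟩ = ⟨i, u⟩) (heb : e ⟨b, hb⟩ = ⟨i, w⟩)
    (huw : dumbbellEdge (r i) (s i) (t i) u w) (hw : w.val ≠ r i + s i) :
    MapsTo h.symm b a := by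
  refine hP.mapsTo_symm_of_gammaEdge_imp_eq fun c hc hcb => ?_
  obtain ⟨u', hec⟩ := Sigma.exists_eq_mk_of_fst_eq (i := i)
    ((he.fst_eq (ha := hc) hcb).trans (congrArg Sigma.fst heb))
  have hu' : u' = u := dumbbellEdge_left_unique hw ((he.gammaEdge_iff hec heb).1 hcb) huw
  have hca : e ⟨c, hc⟩ = e ⟨a, ha⟩ := by rw [hec, hea, hu']
  exact congrArg Subtype.val (e.injective hca)

end IsDumbbellLabelling

lemma ziter_eq_zpow (h : (ℕ → Bool) ≃ₜ (ℕ → Bool)) (n : ℤ) : ziter h n = ⇑(h ^ n) := by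
  unfold ziter
  split_ifs with hn
  · lift n to ℕ using hn
    ext1 x
    simp only [Int.toNat_natCast, zpow_natCast, Homeomorph.coe_pow]
  · obtain ⟨k, rfl⟩ : ∃ k : ℕ, n = -k := ⟨(-n).toNat, by omega⟩
    ext1 x
    rw [zpow_neg, zpow_natCast, ← inv_pow, Homeomorph.coe_pow, neg_neg, Int.toNat_natCast]
    rfl

lemma exists_forall_zpow_mem_of_gammaEdge {h : (ℕ → Bool) ≃ₜ (ℕ → Bool)}
    {P : Finset (Set (ℕ → Bool))} (hP : IsPartition P) (hD : AllComponentsDumbbells h P)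
    {A : ℤ → Set (ℕ → Bool)} (hA : ∀ n, A n ∈ P) (hedge : ∀ n, gammaEdge h (A n) (A (n + 1))) :
    ∃ y, ∀ n, (h ^ n) y ∈ A n := by
  obtain ⟨k, r, s, t, hr, hs, -, e, he⟩ := hD
  have he : IsDumbbellLabelling h P r s t e := he
  obtain ⟨i, v, hv, hpath⟩ := he.exists_path hA hedge
  refine exists_forall_zpow_mem (fun n => (hP.1 _ (hA n)).1.isClosed)
    (fun n => (hP.1 _ (hA n)).2) fun p q hqp hfwd => ?_
  have hp : (v p).val = 0 := by
    by_contra hp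
    exact hfwd (he.mapsTo_of_ne_fork hP (hv p) (hv (p + 1)) (hpath p) hp)
  by_contra hback
  have hq : (v (q + 1)).val = r i + s i := by
    by_contra hq
    exact hback (he.mapsTo_symm_of_ne_junction hP (hv q) (hv (q + 1)) (hpath q) hq)
  exact (dumbbell_path_fork_lt_junction (hr i) (hs i) hpath hp hq).not_ge hqp

theorem shadowing_property (h : (ℕ → Bool) ≃ₜ (ℕ → Bool))
    (hyp : ∀ m : ℕ, 0 < m → ∃ P : Finset (Set (ℕ → Bool)), IsPartition P ∧
      mesh (↑P : Set (Set (ℕ → Bool))) < 1 / (m : ℝ) ∧ AllComponentsDumbbells (⇑h) P) :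
    ∀ ε : ℝ, 0 < ε → ∃ δ : ℝ, 0 < δ ∧
      ∀ x : ℤ → (ℕ → Bool), (∀ n : ℤ, cantorDist (h (x n)) (x (n + 1)) ≤ δ) →
        ∃ y : ℕ → Bool, ∀ n : ℤ, cantorDist (x n) (ziter h n y) < ε := by
  intro ε hε
  obtain ⟨m, hm⟩ := exists_nat_gt (1 / ε)
  have hm0 : 0 < m := by exact_mod_cast (one_div_pos.2 hε).trans hm
  obtain ⟨P, hP, hmesh, hD⟩ := hyp m hm0
  obtain ⟨N, hN⟩ := hP.exists_cylinder_subset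
  refine ⟨1 / ((N : ℝ) + 1), by positivity, fun x hx => ?_⟩
  choose A hAP hxA using fun n => hP.exists_mem (x n)
  have hedge : ∀ n, gammaEdge h (A n) (A (n + 1)) := fun n =>
    ⟨h (x n), mem_image_of_mem h (hxA n),
      hN _ (hAP (n + 1)) _ (hxA (n + 1)) (mem_cylinder_of_cantorDist_le (hx n))⟩
  obtain ⟨y, hy⟩ := exists_forall_zpow_mem_of_gammaEdge hP hD hAP hedge
  refine ⟨y, fun n => ?_⟩
  calc cantorDist (x n) (ziter h n y)
      ≤ cantorDiam (A n) := by
        rw [ziter_eq_zpow]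
        exact cantorDist_le_cantorDiam (hxA n) (hy n)
    _ ≤ mesh (↑P : Set (Set (ℕ → Bool))) := cantorDiam_le_mesh (Finset.mem_coe.2 (hAP n))
    _ < 1 / (m : ℝ) := hmesh
    _ < ε := (one_div_lt hε (by positivity)).1 hm
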